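/- Let E be a real inner product space, let (φ_i)_{i ∈ Fin 4} be an orthonormal family in E, and let P be the 7×4 real matrix P = (1/2)·[[1,1,1,1],[1,−1,0,0],[1,0,−1,0],[1,0,0,−1],[0,1,−1,0],[0,1,0,−1],[0,0,1,−1]]. Define η_k = Σ_{i ∈ Fin 4} P_{k,i} · φ_i for k ∈ Fin 7. Then for every f in the linear span of {φ_0, φ_1, φ_2, φ_3}, Σ_{k ∈ Fin 7} ⟨f, η_k⟩² = ‖f‖² and f = Σ_{k ∈ Fin 7} ⟨f, η_k⟩ · η_k; i.e., the seven vectors η_k form a tight frame with frame bound 1 for this four-dimensional span. -/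
import Mathlib


open scoped RealInnerProductSpace

/-- The 7×4 directional spherical Haar filter matrix `P`. -/
noncomputable def haarFilterP : Matrix (Fin 7) (Fin 4) ℝ :=
  (1 / 2 : ℝ) • !![1, 1, 1, 1;
                   1, -1, 0, 0;
                   1, 0, -1, 0;
                   1, 0, 0, -1;
                   0, 1, -1, 0;
                   0, 1, 0, -1;
                   0, 0, 1, -1]

lemma haarFilterP_col_orth (i j : Fin 4) :
    ∑ k, haarFilterP k i * haarFilterP k j = if i = j then 1 else 0 := by
  fin_cases i <;> fin_cases j <;>
    simp [haarFilterP, Fin.sum_univ_succ] <;> norm_num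

/-- The seven vectors `η_k = Σ_i P_{k,i} φ_i` form a tight frame with frame bound 1
for the span of the four orthonormal vectors `φ_0, …, φ_3`. -/
theorem haar_framelet_tight_frame {E : Type*} [NormedAddCommGroup E]
    [InnerProductSpace ℝ E]
    (φ : Fin 4 → E) (hφ : Orthonormal ℝ φ)
    (η : Fin 7 → E) (hη : ∀ k, η k = ∑ i, haarFilterP k i • φ i)
    (f : E) (hf : f ∈ Submodule.span ℝ (Set.range φ)) :
    ∑ k, ⟪f, η k⟫ ^ 2 = ‖f‖ ^ 2 ∧ f = ∑ k, ⟪f, η k⟫ • η k := by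
  rw [Submodule.mem_span_range_iff_exists_fun ℝ] at hf
  obtain ⟨c, rfl⟩ := hf
  have hip : ∀ k, ⟪∑ i, c i • φ i, η k⟫ = ∑ i, c i * haarFilterP k i := by
    intro k
    rw [hη k, sum_inner]
    refine Finset.sum_congr rfl fun i _ => ?_
    rw [real_inner_smul_left, inner_sum]
    simp only [real_inner_smul_right, orthonormal_iff_ite.mp hφ]
    simp [Finset.mul_sum]
  constructor
  · have h1 : ∑ k, ⟪∑ i, c i • φ i, η k⟫ ^ 2 = ∑ i, (c i) ^ 2 := by
      simp only [hip]
      have : ∀ k : Fin 7, (∑ i, c i * haarFilterP k i) ^ 2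
          = ∑ i, ∑ j, c i * c j * (haarFilterP k i * haarFilterP k j) := by
        intro k
        rw [sq, Finset.sum_mul_sum]
        exact Finset.sum_congr rfl fun i _ => Finset.sum_congr rfl fun j _ => by ring
      simp only [this]
      rw [Finset.sum_comm]
      refine Finset.sum_congr rfl fun i _ => ?_
      rw [Finset.sum_comm]
      have : ∀ j : Fin 4, ∑ k, c i * c j * (haarFilterP k i * haarFilterP k j)
          = c i * c j * (if i = j then 1 else 0) := by
        intro j
        rw [← Finset.mul_sum, haarFilterP_col_orth]
      simp only [this]
      simp [sq]
    rw [h1, ← real_inner_self_eq_norm_sq, sum_inner]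
    refine (Finset.sum_congr rfl fun i _ => ?_).symm
    rw [real_inner_smul_left, inner_sum]
    simp only [real_inner_smul_right, orthonormal_iff_ite.mp hφ]
    simp [sq]
  · have : ∑ k, ⟪∑ i, c i • φ i, η k⟫ • η k
        = ∑ j, (∑ k, (∑ i, c i * haarFilterP k i) * haarFilterP k j) • φ j := by
      simp only [hip]
      simp only [hη, Finset.smul_sum, smul_smul]
      rw [Finset.sum_comm]
      refine Finset.sum_congr rfl fun j _ => ?_
      rw [Finset.sum_smul]
    rw [this]
    refine (Finset.sum_congr rfl fun j _ => ?_).symm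
    congr 1
    have : ∀ k : Fin 7, (∑ i, c i * haarFilterP k i) * haarFilterP k j
        = ∑ i, c i * (haarFilterP k i * haarFilterP k j) := by
      intro k
      rw [Finset.sum_mul]
      exact Finset.sum_congr rfl fun i _ => by ring
    simp only [this]
    rw [Finset.sum_comm]
    have : ∀ i : Fin 4, ∑ k, c i * (haarFilterP k i * haarFilterP k j)
        = c i * (if i = j then 1 else 0) := by
      intro i
      rw [← Finset.mul_sum, haarFilterP_col_orth]
    simp only [this]
    simp
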